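/- arXiv:2107.03972 — 3 statements merged into one kernel-verified Lean document; each statement's English description precedes it below -/
import Mathlib

section
/- Suppose all connectives in 𝒞 are monotonic. Let K = ⟨W, ⪯, D, I⟩ be a constant-domain Kripke model with common domain D, and let w ∈ W. Let M_{K,w} = ⟨D, J⟩ be the classical model with J(p) = I(w,p) for every predicate symbol p. Then for every first-order formula α over 𝒞 and every assignment ρ in D, ‖α‖_{K,w}^ρ = ⟦α⟧_{M_{K,w}}^ρ. -/
open Classical


/-- First-order formulas over a set `C` of propositional connectives
(each `c : C` has arity `ar c`).  Individual variables and, for each arity `n`,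
the `n`-ary predicate symbols are indexed by `ℕ`. -/
inductive Formula (C : Type) (ar : C → ℕ) : Type
  | atom (n : ℕ) (p : ℕ) (v : Fin n → ℕ)
  | conn (c : C) (args : Fin (ar c) → Formula C ar)
  | all (x : ℕ) (φ : Formula C ar)
  | ex  (x : ℕ) (φ : Formula C ar)

/-- A classical first-order model: a nonempty domain `D` (a set in an ambient
type `U`) together with an interpretation of every `n`-ary predicate symbol. -/
structure CModel where
  U : Type
  D : Set U
  D_ne : D.Nonempty
  I : (n : ℕ) → ℕ → (Fin n → U) → Bool

/-- Classical interpretation of a formula (value in `{0,1}`, coded by `Bool`),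
where `tf c` is the truth function of the connective `c`. -/
noncomputable def cVal {C : Type} {ar : C → ℕ}
    (tf : (c : C) → (Fin (ar c) → Bool) → Bool) (M : CModel) :
    Formula C ar → (ℕ → M.U) → Bool
  | .atom n p v, ρ => M.I n p (fun i => ρ (v i))
  | .conn c args, ρ => tf c (fun i => cVal tf M (args i) ρ)
  | .all x φ, ρ => decide (∀ a ∈ M.D, cVal tf M φ (Function.update ρ x a) = true)
  | .ex x φ, ρ => decide (∃ a ∈ M.D, cVal tf M φ (Function.update ρ x a) = true)

/-- A first-order Kripke model: a nonempty preordered set of worlds `W`,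
monotone nonempty domains `D w` (sets in an ambient type `U`), and hereditary
interpretations of the predicate symbols. -/
structure KModel where
  W : Type
  W_ne : Nonempty W
  R : W → W → Prop
  refl : ∀ w, R w w
  trans : ∀ {w v u}, R w v → R v u → R w u
  U : Type
  D : W → Set U
  D_ne : ∀ w, (D w).Nonempty
  D_mono : ∀ {w v}, R w v → D w ⊆ D v
  I : W → (n : ℕ) → ℕ → (Fin n → U) → Bool
  hered : ∀ {w v}, R w v → ∀ n p (a : Fin n → U),
      (∀ i, a i ∈ D w) → I w n p a = true → I v n p a = true

/-- Kripke interpretation of a formula at a world (value in `{0,1}`). -/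
noncomputable def kVal {C : Type} {ar : C → ℕ}
    (tf : (c : C) → (Fin (ar c) → Bool) → Bool) (K : KModel) :
    Formula C ar → K.W → (ℕ → K.U) → Bool
  | .atom n p v, w, ρ => K.I w n p (fun i => ρ (v i))
  | .conn c args, w, ρ =>
      decide (∀ u, K.R w u → tf c (fun i => kVal tf K (args i) u ρ) = true)
  | .all x φ, w, ρ =>
      decide (∀ u, K.R w u → ∀ a ∈ K.D u,
        kVal tf K φ u (Function.update ρ x a) = true)
  | .ex x φ, w, ρ =>
      decide (∃ a ∈ K.D w, kVal tf K φ w (Function.update ρ x a) = true)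

/-- A Kripke model has constant domains. -/
def ConstDom (K : KModel) : Prop := ∀ w v : K.W, K.D w = K.D v

/-- The sequent `Γ ⟹ Δ` is valid in all classical models (`Γ ⟹ Δ ∈ FOCLS(𝒞)`):
at every classical model and assignment into the domain, its interpretation is 1,
i.e. it is never the case that everything in `Γ` gets 1 and everything in `Δ` gets 0. -/
def SeqCValid {C : Type} {ar : C → ℕ} (tf : (c : C) → (Fin (ar c) → Bool) → Bool)
    (Γ Δ : Set (Formula C ar)) : Prop :=
  ∀ M : CModel, ∀ ρ : ℕ → M.U, (∀ x, ρ x ∈ M.D) →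
    ¬ ((∀ φ ∈ Γ, cVal tf M φ ρ = true) ∧ (∀ φ ∈ Δ, cVal tf M φ ρ = false))

/-- The sequent `Γ ⟹ Δ` is valid in all constant-domain Kripke models
(`Γ ⟹ Δ ∈ FOCDS(𝒞)`). -/
def SeqCDValid {C : Type} {ar : C → ℕ} (tf : (c : C) → (Fin (ar c) → Bool) → Bool)
    (Γ Δ : Set (Formula C ar)) : Prop :=
  ∀ K : KModel, ConstDom K → ∀ w : K.W, ∀ ρ : ℕ → K.U, (∀ x, ρ x ∈ K.D w) →
    ¬ ((∀ φ ∈ Γ, kVal tf K φ w ρ = true) ∧ (∀ φ ∈ Δ, kVal tf K φ w ρ = false))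

/-- A truth function is monotonic. -/
def MonoTF {n : ℕ} (f : (Fin n → Bool) → Bool) : Prop :=
  ∀ a b : Fin n → Bool, (∀ i, a i ≤ b i) → f a ≤ f b

/-- Propositional formulas over `C`: built from propositional symbols
(indexed by `ℕ`) by the connectives in `C`. -/
inductive PFormula (C : Type) (ar : C → ℕ) : Type
  | atom (p : ℕ)
  | conn (c : C) (args : Fin (ar c) → PFormula C ar)

/-- Value of a propositional formula under a classical valuation `v`. -/
def pcVal {C : Type} {ar : C → ℕ} (tf : (c : C) → (Fin (ar c) → Bool) → Bool)
    (v : ℕ → Bool) : PFormula C ar → Bool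
  | .atom p => v p
  | .conn c args => tf c (fun i => pcVal tf v (args i))

/-- A propositional Kripke model. -/
structure PKModel where
  W : Type
  W_ne : Nonempty W
  R : W → W → Prop
  refl : ∀ w, R w w
  trans : ∀ {w v u}, R w v → R v u → R w u
  I : W → ℕ → Bool
  hered : ∀ {w v}, R w v → ∀ p, I w p = true → I v p = true

/-- Kripke interpretation of a propositional formula at a world. -/
noncomputable def pkVal {C : Type} {ar : C → ℕ}
    (tf : (c : C) → (Fin (ar c) → Bool) → Bool) (K : PKModel) :
    PFormula C ar → K.W → Bool
  | .atom p, w => K.I w p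
  | .conn c args, w =>
      decide (∀ u, K.R w u → tf c (fun i => pkVal tf K (args i) u) = true)

/-- The propositional sequent `Γ ⟹ Δ` is valid under all classical valuations
(`Γ ⟹ Δ ∈ CLS(𝒞)`). -/
def PSeqCValid {C : Type} {ar : C → ℕ} (tf : (c : C) → (Fin (ar c) → Bool) → Bool)
    (Γ Δ : Set (PFormula C ar)) : Prop :=
  ∀ v : ℕ → Bool,
    ¬ ((∀ φ ∈ Γ, pcVal tf v φ = true) ∧ (∀ φ ∈ Δ, pcVal tf v φ = false))

/-- The propositional sequent `Γ ⟹ Δ` is valid at all worlds of all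
propositional Kripke models (`Γ ⟹ Δ ∈ ILS(𝒞)`). -/
def PSeqKValid {C : Type} {ar : C → ℕ} (tf : (c : C) → (Fin (ar c) → Bool) → Bool)
    (Γ Δ : Set (PFormula C ar)) : Prop :=
  ∀ K : PKModel, ∀ w : K.W,
    ¬ ((∀ φ ∈ Γ, pkVal tf K φ w = true) ∧ (∀ φ ∈ Δ, pkVal tf K φ w = false))

/-- The formula `α` is classically valid (`α ∈ FOCL(𝒞)`). -/
def FmlCValid {C : Type} {ar : C → ℕ} (tf : (c : C) → (Fin (ar c) → Bool) → Bool)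
    (α : Formula C ar) : Prop :=
  ∀ M : CModel, ∀ ρ : ℕ → M.U, (∀ x, ρ x ∈ M.D) → cVal tf M α ρ = true

/-- The formula `α` is CD-valid (`α ∈ FOCD(𝒞)`): valid in all constant-domain
Kripke models. -/
def FmlCDValid {C : Type} {ar : C → ℕ} (tf : (c : C) → (Fin (ar c) → Bool) → Bool)
    (α : Formula C ar) : Prop :=
  ∀ K : KModel, ConstDom K → ∀ w : K.W, ∀ ρ : ℕ → K.U, (∀ x, ρ x ∈ K.D w) →
    kVal tf K α w ρ = true

/-- `α` is a propositional formula built only from propositional symbols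
(0-ary predicate symbols) and the connective `c`. -/
inductive IsPropC {C : Type} {ar : C → ℕ} (c : C) : Formula C ar → Prop
  | atom (p : ℕ) (v : Fin 0 → ℕ) : IsPropC c (.atom 0 p v)
  | conn (args : Fin (ar c) → Formula C ar) :
      (∀ i, IsPropC c (args i)) → IsPropC c (.conn c args)

/-- A propositional formula viewed as a first-order formula (propositional
symbols become 0-ary predicate symbols). -/
def PFormula.toFO {C : Type} {ar : C → ℕ} : PFormula C ar → Formula C ar
  | .atom p => .atom 0 p (fun i => i.elim0)
  | .conn c args => .conn c (fun i => (args i).toFO)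

/-!
Heredity makes the value of every formula along `⪯` increase. For a monotonic connective the
Kripke clause "f_c holds at every successor" therefore reduces to its instance at `w` itself,
and with constant domains the universal clause likewise reduces to the domain at `w`; the
remaining clauses are classical already.
-/

section KripkeSemantics

variable {C : Type} {ar : C → ℕ} (tf : (c : C) → (Fin (ar c) → Bool) → Bool) (K : KModel)

theorem update_mem_of_forall_mem {U : Type} {S : Set U} {ρ : ℕ → U} (hρ : ∀ x, ρ x ∈ S)
    (x : ℕ) {a : U} (ha : a ∈ S) : ∀ y, Function.update ρ x a y ∈ S :=
  (Function.forall_update_iff ρ fun _ b => b ∈ S).2 ⟨ha, fun y _ => hρ y⟩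

theorem kVal_le_of_rel {w v : K.W} (hwv : K.R w v) (α : Formula C ar) {ρ : ℕ → K.U}
    (hρ : ∀ x, ρ x ∈ K.D w) : kVal tf K α w ρ ≤ kVal tf K α v ρ := by
  induction α generalizing ρ with
  | atom n p vs => exact Bool.le_iff_imp.2 (K.hered hwv n p _ fun i => hρ _)
  | conn c args =>
    simp only [kVal, Bool.le_iff_imp, decide_eq_true_eq]
    exact fun h u hvu => h u (K.trans hwv hvu)
  | all x φ =>
    simp only [kVal, Bool.le_iff_imp, decide_eq_true_eq]
    exact fun h u hvu => h u (K.trans hwv hvu)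
  | ex x φ ih =>
    simp only [kVal, Bool.le_iff_imp, decide_eq_true_eq]
    rintro ⟨a, ha, hφ⟩
    have hle := ih (update_mem_of_forall_mem hρ x ha)
    exact ⟨a, K.D_mono hwv ha, Bool.le_iff_imp.1 hle hφ⟩

theorem kVal_conn_of_monoTF {c : C} (hc : MonoTF (tf c)) (args : Fin (ar c) → Formula C ar)
    (w : K.W) {ρ : ℕ → K.U} (hρ : ∀ x, ρ x ∈ K.D w) :
    kVal tf K (.conn c args) w ρ = tf c (fun i => kVal tf K (args i) w ρ) := by
  rw [kVal, Bool.eq_iff_iff, decide_eq_true_iff]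
  refine ⟨fun h => h w (K.refl w), fun h u hwu => ?_⟩
  have hle := hc _ _ fun i => kVal_le_of_rel tf K hwu (args i) hρ
  exact Bool.le_iff_imp.1 hle h

theorem kVal_all_of_constDom (hcd : ConstDom K) (x : ℕ) (φ : Formula C ar) (w : K.W)
    {ρ : ℕ → K.U} (hρ : ∀ x, ρ x ∈ K.D w) :
    kVal tf K (.all x φ) w ρ =
      decide (∀ a ∈ K.D w, kVal tf K φ w (Function.update ρ x a) = true) := by
  rw [kVal, Bool.eq_iff_iff, decide_eq_true_iff, decide_eq_true_iff]
  refine ⟨fun h a ha => h w (K.refl w) a ha, fun h u hwu a ha => ?_⟩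
  rw [← hcd w u] at ha
  have hle := kVal_le_of_rel tf K hwu φ (update_mem_of_forall_mem hρ x ha)
  exact Bool.le_iff_imp.1 hle (h a ha)

end KripkeSemantics

/-- if all connectives are monotonic, `K` is a constant-domain
Kripke model and `w` a world, then the Kripke interpretation at `w` coincides
with the classical interpretation in the model `M_{K,w} = ⟨D, I(w,·)⟩`. -/
theorem stmt_5 (C : Type) (ar : C → ℕ) (tf : (c : C) → (Fin (ar c) → Bool) → Bool)
    (hmono : ∀ c : C, MonoTF (tf c)) (K : KModel) (hcd : ConstDom K) (w : K.W)
    (α : Formula C ar) (ρ : ℕ → K.U) (hρ : ∀ x, ρ x ∈ K.D w) :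
    kVal tf K α w ρ =
      cVal tf (CModel.mk K.U (K.D w) (K.D_ne w) (K.I w)) α ρ := by
  induction α generalizing ρ with
  | atom n p vs => rfl
  | conn c args ih =>
    rw [kVal_conn_of_monoTF tf K (hmono c) args w hρ, cVal]
    simp only [ih _ ρ hρ]
  | all x φ ih =>
    rw [kVal_all_of_constDom tf K hcd x φ w hρ, cVal, decide_eq_decide]
    exact forall₂_congr fun a ha => by rw [ih _ (update_mem_of_forall_mem hρ x ha)]
  | ex x φ ih =>
    rw [kVal, cVal, decide_eq_decide]
    exact exists_congr fun a => and_congr_right fun ha => by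
      rw [ih _ (update_mem_of_forall_mem hρ x ha)]
end

section
/- If all connectives in 𝒞 are monotonic, then a first-order formula over 𝒞 is valid in all constant-domain Kripke models if and only if it is valid in all classical models (i.e., FOCD(𝒞) = FOCL(𝒞)). -/
open Classical


/-! In a constant-domain Kripke model, read every world `w` as the classical model `K.toCModel w`.
These classical models grow along `⪯`: heredity gives this for atoms, monotonicity of the
truth functions carries it through the connectives, and constant domains carry it through `∀`.
Hence the clauses "for all `v ⪰ w`" in the Kripke semantics of connectives and of `∀` are already
decided at `v = w`, so Kripke truth at `w` is classical truth in `K.toCModel w`. This gives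
FOCL ⊆ FOCD, and FOCD ⊆ FOCL because every classical model is a one-world Kripke model. -/

open Function

lemma forall_update_mem {α U : Type} [DecidableEq α] {S : Set U} {ρ : α → U}
    (hρ : ∀ y, ρ y ∈ S) (x : α) {a : U} (ha : a ∈ S) : ∀ y, update ρ x a y ∈ S :=
  (forall_update_iff ρ (p := fun _ b => b ∈ S)).2 ⟨ha, fun y _ => hρ y⟩

lemma MonoTF.imp {n : ℕ} {f : (Fin n → Bool) → Bool} (hf : MonoTF f) {a b : Fin n → Bool}
    (hab : ∀ i, a i = true → b i = true) (ha : f a = true) : f b = true :=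
  Bool.le_iff_imp.1 (hf a b fun i => Bool.le_iff_imp.2 (hab i)) ha

abbrev KModel.toCModel (K : KModel) (w : K.W) : CModel :=
  ⟨K.U, K.D w, K.D_ne w, K.I w⟩

def CModel.toKModel (M : CModel) : KModel where
  W := Unit
  W_ne := ⟨()⟩
  R _ _ := True
  refl _ := trivial
  trans _ _ := trivial
  U := M.U
  D _ := M.D
  D_ne _ := M.D_ne
  D_mono _ := subset_rfl
  I _ := M.I
  hered _ _ _ _ _ h := h

section

variable {C : Type} {ar : C → ℕ} (tf : (c : C) → (Fin (ar c) → Bool) → Bool) {K : KModel}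

theorem cVal_toCModel_of_R (hmono : ∀ c : C, MonoTF (tf c)) (hcd : ConstDom K)
    (α : Formula C ar) {w v : K.W} (hwv : K.R w v) {ρ : ℕ → K.U} (hρ : ∀ x, ρ x ∈ K.D w)
    (h : cVal tf (K.toCModel w) α ρ = true) : cVal tf (K.toCModel v) α ρ = true := by
  induction α generalizing ρ with
  | atom n p xs => exact K.hered hwv n p _ (fun i => hρ _) h
  | conn c args ih => exact (hmono c).imp (fun i => ih i hρ) h
  | all x φ ih =>
    simp only [cVal, KModel.toCModel, decide_eq_true_eq] at h ⊢
    intro a ha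
    rw [hcd v w] at ha
    exact ih (forall_update_mem hρ x ha) (h a ha)
  | ex x φ ih =>
    simp only [cVal, KModel.toCModel, decide_eq_true_eq] at h ⊢
    obtain ⟨a, ha, hφ⟩ := h
    exact ⟨a, hcd w v ▸ ha, ih (forall_update_mem hρ x ha) hφ⟩

theorem kVal_eq_cVal_toCModel (hmono : ∀ c : C, MonoTF (tf c)) (hcd : ConstDom K)
    (α : Formula C ar) {w : K.W} {ρ : ℕ → K.U} (hρ : ∀ x, ρ x ∈ K.D w) :
    kVal tf K α w ρ = cVal tf (K.toCModel w) α ρ := by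
  induction α generalizing w ρ with
  | atom n p xs => rfl
  | conn c args ih =>
    have hargs : ∀ u, K.R w u → ∀ i, kVal tf K (args i) u ρ = cVal tf (K.toCModel u) (args i) ρ :=
      fun u _ i => ih i (hcd w u ▸ hρ)
    rw [kVal, cVal, Bool.eq_iff_iff, decide_eq_true_eq]
    constructor
    · intro h
      simpa only [hargs w (K.refl w)] using h w (K.refl w)
    · intro h u hwu
      simp only [hargs u hwu]
      exact (hmono c).imp (fun i => cVal_toCModel_of_R tf hmono hcd (args i) hwu hρ) h
  | all x φ ih =>
    simp only [kVal, cVal]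
    refine decide_eq_decide.2 ?_
    constructor
    · intro h a ha
      rw [← ih (forall_update_mem hρ x ha)]
      exact h w (K.refl w) a ha
    · intro h u hwu a ha
      rw [hcd u w] at ha
      rw [ih (hcd w u ▸ forall_update_mem hρ x ha)]
      exact cVal_toCModel_of_R tf hmono hcd φ hwu (forall_update_mem hρ x ha) (h a ha)
  | ex x φ ih =>
    simp only [kVal, cVal]
    exact decide_eq_decide.2 <| exists_congr fun a => and_congr_right fun ha => by
      rw [ih (forall_update_mem hρ x ha)]

end

/-- if all connectives in `𝒞` are monotonic then
`FOCD(𝒞) = FOCL(𝒞)`. -/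
theorem stmt_6 (C : Type) (ar : C → ℕ) (tf : (c : C) → (Fin (ar c) → Bool) → Bool)
    (hmono : ∀ c : C, MonoTF (tf c)) :
    ∀ α : Formula C ar, FmlCDValid tf α ↔ FmlCValid tf α := by
  intro α
  constructor
  · intro h M ρ hρ
    have hK := h M.toKModel (fun _ _ => rfl) () ρ hρ
    rwa [kVal_eq_cVal_toCModel (K := M.toKModel) (w := ()) tf hmono (fun _ _ => rfl) α hρ] at hK
  · intro h K hcd w ρ hρ
    rw [kVal_eq_cVal_toCModel tf hmono hcd α hρ]
    exact h (K.toCModel w) ρ hρ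
end

section
/- Let c ∈ 𝒞 be a non-monotonic connective with f_c(0,…,0) = 0 and f_c(1,…,1) = 1. Then there exist propositional formulas φ and χ over 𝒞 (built only from propositional symbols and c) such that the sequent φ ⟹ χ is valid in all classical models but not valid in some constant-domain Kripke model; i.e., φ ⟹ χ ∈ FOCLS(𝒞) \ FOCDS(𝒞). -/
open Classical


/-! A non-monotonic `f_c` drops from 1 to 0 when one argument `j` of some `a` is raised.
Putting a symbol `q` at the positions where `a` is 1 makes `c`, wherever `q` holds, a binary
connective `B y z` with `B y y = 1` and `B 0 1 = 0`: classically `z → y` or `y ↔ z`. In either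
case `q ⟹ B p θ` is classically valid for a formula `θ` classically equivalent to `p` (from
Peirce's law, resp. `¬¬p ↔ p`), while in the two-world model where only `p` varies `θ` is true
everywhere and `p` is false at the root, so `B p θ` fails there. -/

open Function

theorem exists_update_eq_false_of_not_monoTF {n : ℕ} {f : (Fin n → Bool) → Bool}
    (hf : ¬ MonoTF f) : ∃ a j, a j = false ∧ f a = true ∧ f (update a j true) = false := by
  let := Fintype.toLocallyFiniteOrder (α := Fin n → Bool)
  have hmono : ¬ Monotone f := fun h => hf fun _ _ hab => h hab
  rw [monotone_iff_forall_covBy] at hmono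
  push Not at hmono
  obtain ⟨a, b, hab, hfab⟩ := hmono
  obtain ⟨j, x, hx, rfl⟩ := Pi.covBy_iff_exists_right_eq.1 hab
  obtain ⟨haj, rfl⟩ := Bool.lt_iff.1 (Bool.covBy_iff.1 hx)
  obtain ⟨hfb, hfa⟩ := Bool.lt_iff.1 hfab
  exact ⟨a, j, haj, hfa, hfb⟩

def plug {α : Type*} {n : ℕ} (a : Fin n → Bool) (j : Fin n) (x y z : α) : Fin n → α :=
  fun i => if i = j then z else if a i then x else y

section plug

variable {α β : Type*} {n : ℕ} (a : Fin n → Bool) (j : Fin n)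

theorem comp_plug (g : α → β) (x y z : α) :
    (fun i => g (plug a j x y z i)) = plug a j (g x) (g y) (g z) := by
  funext i
  unfold plug
  split_ifs <;> rfl

theorem plug_self (x : α) : plug a j x x x = fun _ => x := by
  funext i
  unfold plug
  split_ifs <;> rfl

theorem plug_true_false_false (haj : a j = false) : plug a j true false false = a := by
  funext i
  unfold plug
  split_ifs with hij <;> simp_all

theorem plug_true_false_true : plug a j true false true = update a j true := by
  funext i
  unfold plug
  split_ifs with hij <;> simp_all [update_of_ne]

end plug

/-- The binary truth functions with `B y y = 1` and `B 0 1 = 0` are exactly `z → y`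
(when `B 1 0 = 1`) and `y ↔ z` (when `B 1 0 = 0`). -/
structure IsImpLike (B : Bool → Bool → Bool) : Prop where
  self : ∀ y, B y y = true
  false_true : B false true = false

theorem exists_isImpLike_of_not_monoTF {n : ℕ} {f : (Fin n → Bool) → Bool}
    (hf : ¬ MonoTF f) (h1 : f (fun _ => true) = true) :
    ∃ a j, IsImpLike fun y z => f (plug a j true y z) := by
  obtain ⟨a, j, haj, hfa, hfb⟩ := exists_update_eq_false_of_not_monoTF hf
  refine ⟨a, j, ⟨?_, ?_⟩⟩
  · rintro (_ | _)
    · rwa [plug_true_false_false a j haj]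
    · rwa [plug_self]
  · rwa [plug_true_false_true]

namespace IsImpLike

variable {B : Bool → Bool → Bool}

/-- Classically `((p → r) → p) = p` for `→`, and `(r ↔ (r ↔ p)) = p` for `↔`. -/
theorem apply_apply_eq (hB : IsImpLike B) (r p : Bool) :
    B (bif B true false then p else r) (B r p) = p := by
  have := hB.self
  have := hB.false_true
  cases h : B true false <;> cases r <;> cases p <;> simp_all

theorem apply_cond_false (hB : IsImpLike B) (v : Bool) :
    B (bif B true false then v else false) false = true := by
  have := hB.self
  cases h : B true false <;> cases v <;> simp_all

end IsImpLike

abbrev twoWorldModel : KModel where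
  W := Bool
  W_ne := ⟨false⟩
  R := (· ≤ ·)
  refl := le_refl
  trans := le_trans
  U := Unit
  D := fun _ => Set.univ
  D_ne := fun _ => Set.univ_nonempty
  D_mono := fun _ => subset_rfl
  I := fun w _ p _ => p == 0 || (p == 2 && w)
  hered := by
    rintro (_ | _) (_ | _) hwv <;> simp_all [Bool.le_iff_imp]

namespace Formula

variable {C : Type} {ar : C → ℕ}

def var (p : ℕ) : Formula C ar := .atom 0 p Fin.elim0

/-- The connective `c` with `var 0` at the positions where `a` is true; while `var 0` holds
it computes the binary truth function `fun y z => f_c (plug a j true y z)`. -/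
def bin (c : C) (a : Fin (ar c) → Bool) (j : Fin (ar c)) (y z : Formula C ar) : Formula C ar :=
  .conn c (plug a j (var 0) y z)

/-- With `B := fun y z => f_c (plug a j true y z)`, `var 2 = p` and `var 1 = r`, this is Peirce's
law `((p → r) → p) → p` if `B` is `z → y`, and `¬¬p ↔ p` with `¬x := r ↔ x` if `B` is `y ↔ z`. -/
def peirce (c : C) (a : Fin (ar c) → Bool) (j : Fin (ar c)) (b : Bool) : Formula C ar :=
  bin c a j (var 2) (bin c a j (bif b then var 2 else var 1) (bin c a j (var 1) (var 2)))

theorem isPropC_var (c : C) (p : ℕ) : IsPropC c (var p : Formula C ar) :=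
  .atom p _

theorem isPropC_bin {c : C} (a : Fin (ar c) → Bool) (j : Fin (ar c)) {y z : Formula C ar}
    (hy : IsPropC c y) (hz : IsPropC c z) : IsPropC c (bin c a j y z) := by
  refine .conn _ fun i => ?_
  unfold plug
  split_ifs
  exacts [hz, isPropC_var c 0, hy]

theorem isPropC_peirce (c : C) (a : Fin (ar c) → Bool) (j : Fin (ar c)) (b : Bool) :
    IsPropC c (peirce c a j b : Formula C ar) := by
  have hx : IsPropC c (bif b then var 2 else var 1 : Formula C ar) := by
    cases b <;> exact isPropC_var c _
  exact isPropC_bin a j (isPropC_var c 2)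
    (isPropC_bin a j hx (isPropC_bin a j (isPropC_var c 1) (isPropC_var c 2)))

variable (tf : (c : C) → (Fin (ar c) → Bool) → Bool) (c : C) (a : Fin (ar c) → Bool)
  (j : Fin (ar c))

theorem cVal_bin {M : CModel} {ρ : ℕ → M.U} (hq : cVal tf M (var 0) ρ = true)
    (y z : Formula C ar) :
    cVal tf M (bin c a j y z) ρ = tf c (plug a j true (cVal tf M y ρ) (cVal tf M z ρ)) := by
  rw [← hq, bin, cVal, comp_plug a j (cVal tf M · ρ)]

theorem kVal_bin {K : KModel} {w : K.W} {ρ : ℕ → K.U}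
    (hq : ∀ u, K.R w u → kVal tf K (var 0) u ρ = true) (y z : Formula C ar) :
    kVal tf K (bin c a j y z) w ρ =
      decide (∀ u, K.R w u → tf c (plug a j true (kVal tf K y u ρ) (kVal tf K z u ρ)) = true) := by
  rw [bin, kVal, decide_eq_decide]
  refine forall₂_congr fun u hwu => ?_
  rw [comp_plug a j (kVal tf K · u ρ), hq u hwu]

theorem cVal_peirce (hB : IsImpLike fun y z => tf c (plug a j true y z)) {M : CModel}
    {ρ : ℕ → M.U} (hq : cVal tf M (var 0) ρ = true) :
    cVal tf M (peirce c a j (tf c (plug a j true true false))) ρ = true := by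
  have hθ := hB.apply_apply_eq (cVal tf M (var 1) ρ) (cVal tf M (var 2) ρ)
  rw [peirce, cVal_bin tf c a j hq, cVal_bin tf c a j hq, cVal_bin tf c a j hq,
    Bool.apply_cond (cVal tf M · ρ), hθ]
  exact hB.self _

theorem kVal_var_twoWorldModel (p : ℕ) (u : Bool) (ρ : ℕ → Unit) :
    kVal tf twoWorldModel (var p : Formula C ar) u ρ = (p == 0 || (p == 2 && u)) :=
  rfl

theorem kVal_peirce_twoWorldModel (hB : IsImpLike fun y z => tf c (plug a j true y z))
    (ρ : ℕ → Unit) :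
    kVal tf twoWorldModel (peirce c a j (tf c (plug a j true true false))) false ρ = false := by
  have hq (u : Bool) : kVal tf twoWorldModel (var 0 : Formula C ar) u ρ = true := rfl
  have hnot (u : Bool) : kVal tf twoWorldModel (bin c a j (var 1) (var 2)) u ρ = false := by
    rw [kVal_bin tf c a j (fun v _ => hq v), decide_eq_false_iff_not]
    intro h
    have := h true (Bool.le_true u)
    simp [kVal_var_twoWorldModel, hB.false_true] at this
  have hθ (u : Bool) : kVal tf twoWorldModel
      (bin c a j (bif tf c (plug a j true true false) then var 2 else var 1)
        (bin c a j (var 1) (var 2))) u ρ = true := by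
    rw [kVal_bin tf c a j (fun v _ => hq v)]
    simp only [decide_eq_true_eq]
    intro v _
    rw [hnot v, Bool.apply_cond (kVal tf twoWorldModel · v ρ)]
    simpa [kVal_var_twoWorldModel] using hB.apply_cond_false v
  rw [peirce, kVal_bin tf c a j (fun v _ => hq v), decide_eq_false_iff_not]
  intro h
  have := h false le_rfl
  rw [hθ, kVal_var_twoWorldModel] at this
  simp [hB.false_true] at this

end Formula

theorem stmt_14_general (C : Type) (ar : C → ℕ) (tf : (c : C) → (Fin (ar c) → Bool) → Bool)
    (c : C) (hnm : ¬ MonoTF (tf c))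
    (h1 : tf c (fun _ => true) = true) :
    ∃ φ χ : Formula C ar, IsPropC c φ ∧ IsPropC c χ ∧
      SeqCValid tf {φ} {χ} ∧ ¬ SeqCDValid tf {φ} {χ} := by
  obtain ⟨a, j, hB⟩ := exists_isImpLike_of_not_monoTF hnm h1
  refine ⟨.var 0, .peirce c a j (tf c (plug a j true true false)), Formula.isPropC_var c 0,
    Formula.isPropC_peirce c a j _, ?_, ?_⟩
  · rintro M ρ - ⟨hφ, hχ⟩
    have := Formula.cVal_peirce tf c a j hB (hφ _ rfl)
    rw [hχ _ rfl] at this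
    exact Bool.false_ne_true this
  · intro h
    refine h twoWorldModel (fun _ _ => rfl) false (fun _ => ()) (fun _ => trivial) ⟨?_, ?_⟩
    · rintro _ rfl
      rfl
    · rintro _ rfl
      exact Formula.kVal_peirce_twoWorldModel tf c a j hB _

/-- if `c` is non-monotonic with `f_c(0,…,0) = 0` and
`f_c(1,…,1) = 1`, then some sequent `φ ⟹ χ` of propositional formulas built
only from propositional symbols and `c` is in `FOCLS(𝒞) \ FOCDS(𝒞)`. -/
theorem stmt_14 (C : Type) (ar : C → ℕ) (tf : (c : C) → (Fin (ar c) → Bool) → Bool)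
    (c : C) (hnm : ¬ MonoTF (tf c))
    (h0 : tf c (fun _ => false) = false) (h1 : tf c (fun _ => true) = true) :
    ∃ φ χ : Formula C ar, IsPropC c φ ∧ IsPropC c χ ∧
      SeqCValid tf {φ} {χ} ∧ ¬ SeqCDValid tf {φ} {χ} :=
  stmt_14_general C ar tf c hnm h1
end
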